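/- Let P_n, P : 𝒟̄ → ℝ be continuous, each bounded above by its value at (0,0) plus A, with P_n → P uniformly on 𝒟̄ = [0,1/(2r0²)] × [0,H]. Let z_n → z in [0,H], ρ_n ∈ Argmin Π_{P_n}(·, z_n) with ρ_n → ρ. Then Π_{P_n}(ρ_n, z_n) → Π_P(ρ, z) and ρ ∈ Argmin Π_P(·, z). -/

import Mathlib

/-!
Each `P_n` lies below `P_n(0,0) + A`, and `P_n(0,0) → P(0,0)`, so all `P_n` lie below one
constant `B`. For `Q ≤ B` the functional `Π_Q(ρ, z)` is bounded below by its explicit value for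
`Q ≡ B`, which is positive once `ρ` exceeds an a priori bound `M < 1/(2r0²)`; since a minimizer
satisfies `Π ≤ Π(0) = 0`, all `ρ_n` lie in `[0, M]`. There `e` is bounded, so the integrands of
`Π_{P_n}(·, z_n)` converge uniformly to that of `Π_P(·, z)` (uniform continuity of `P` absorbs
`z_n → z`), hence `Π_{P_n}(σ_n, z_n) → Π_P(σ, z)` whenever `σ_n → σ` in `[0, M]`. Passing to the
limit in `Π_{P_n}(ρ_n, z_n) ≤ Π_{P_n}(ρ', z_n)` shows that `ρ` is a minimizer.
-/

open MeasureTheory Filter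

/-- `e(s) = r0^4/(1-2 s r0²)²`. -/
noncomputable def eFun (r0 s : ℝ) : ℝ := r0 ^ 4 / (1 - 2 * s * r0 ^ 2) ^ 2

/-- `Π_Q(ρ,z)`. -/
noncomputable def PiFun (r0 Ω : ℝ) (Q : ℝ × ℝ → ℝ) (ρ z : ℝ) : ℝ :=
  ∫ s in (0 : ℝ)..ρ, (Ω ^ 2 * r0 ^ 2 / (2 * (1 - 2 * s * r0 ^ 2)) - Q (s, z)) * eFun r0 s

/-- `Argmin Π_Q(·,z)` over `[0, 1/(2r0²))`. -/
noncomputable def ArgminPi (r0 Ω : ℝ) (Q : ℝ × ℝ → ℝ) (z : ℝ) : Set ℝ :=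
  {ρ ∈ Set.Ico (0 : ℝ) (1 / (2 * r0 ^ 2)) |
    ∀ ρ' ∈ Set.Ico (0 : ℝ) (1 / (2 * r0 ^ 2)), PiFun r0 Ω Q ρ z ≤ PiFun r0 Ω Q ρ' z}

open Set Topology

section UniformConvergence

variable {ι X Y β : Type*} {l : Filter ι}

theorem TendstoUniformlyOn.mul_right_of_norm_le {R : Type*} [NonUnitalSeminormedRing R]
    {F : ι → X → R} {f w : X → R} {s : Set X} {C : ℝ}
    (hF : TendstoUniformlyOn F f l s) (hw : ∀ x ∈ s, ‖w x‖ ≤ C) :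
    TendstoUniformlyOn (fun i x => F i x * w x) (fun x => f x * w x) l s := by
  rw [Metric.tendstoUniformlyOn_iff] at hF ⊢
  intro ε hε
  filter_upwards [hF (ε / (|C| + 1)) (by positivity)] with i hi x hx
  calc dist (f x * w x) (F i x * w x) ≤ dist (f x) (F i x) * ‖w x‖ := by
        rw [dist_eq_norm, dist_eq_norm, ← sub_mul]; exact norm_mul_le _ _
    _ ≤ ε / (|C| + 1) * |C| :=
        mul_le_mul (hi x hx).le ((hw x hx).trans (le_abs_self C)) (norm_nonneg _) (by positivity)
    _ < ε := by
        rw [div_mul_eq_mul_div, div_lt_iff₀ (by positivity)]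
        nlinarith [abs_nonneg C]

theorem TendstoUniformlyOn.comp_prodMk_of_tendsto [PseudoMetricSpace X] [PseudoMetricSpace Y]
    [PseudoMetricSpace β] {F : ι → X × Y → β} {f : X × Y → β} {S : Set X} {T : Set Y}
    {y : ι → Y} {y₀ : Y} (hF : TendstoUniformlyOn F f l (S ×ˢ T)) (hf : ContinuousOn f (S ×ˢ T))
    (hST : IsCompact (S ×ˢ T)) (hy : Tendsto y l (𝓝 y₀)) (hyT : ∀ᶠ i in l, y i ∈ T)
    (hy₀ : y₀ ∈ T) :
    TendstoUniformlyOn (fun i x => F i (x, y i)) (fun x => f (x, y₀)) l S := by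
  rw [Metric.tendstoUniformlyOn_iff] at hF ⊢
  intro ε hε
  obtain ⟨δ, hδ, hfδ⟩ := Metric.uniformContinuousOn_iff.mp
    (hST.uniformContinuousOn_of_continuous hf) (ε / 2) (half_pos hε)
  filter_upwards [hF (ε / 2) (half_pos hε), Metric.tendsto_nhds.mp hy δ hδ, hyT]
    with i hFi hyi hyiT x hx
  calc dist (f (x, y₀)) (F i (x, y i))
      ≤ dist (f (x, y₀)) (f (x, y i)) + dist (f (x, y i)) (F i (x, y i)) := dist_triangle ..
    _ < ε / 2 + ε / 2 := by
      refine add_lt_add (hfδ _ ⟨hx, hy₀⟩ _ ⟨hx, hyiT⟩ ?_) (hFi _ ⟨hx, hyiT⟩)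
      simpa [Prod.dist_eq, dist_comm] using hyi
    _ = ε := add_halves ε

end UniformConvergence

theorem tendsto_intervalIntegral_of_tendstoUniformlyOn {ι E : Type*} [NormedAddCommGroup E]
    [NormedSpace ℝ E] {l : Filter ι} {g : ι → ℝ → E} {f : ℝ → E} {a b τ : ℝ} {σ : ι → ℝ}
    (hg : ∀ i, IntegrableOn (g i) (Icc a b)) (hf : IntegrableOn f (Icc a b))
    (hgf : TendstoUniformlyOn g f l (Icc a b)) (hσ : ∀ᶠ i in l, σ i ∈ Icc a b)
    (hστ : Tendsto σ l (𝓝 τ)) (hτ : τ ∈ Icc a b) :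
    Tendsto (fun i => ∫ s in a..σ i, g i s) l (𝓝 (∫ s in a..τ, f s)) := by
  have hab : a ≤ b := hτ.1.trans hτ.2
  have hsub : ∀ {t}, t ∈ Icc a b → uIcc a t ⊆ Icc a b := fun ht => by
    rw [uIcc_of_le ht.1]; exact Icc_subset_Icc_right ht.2
  have hprim : Tendsto (fun i => ∫ s in a..σ i, f s) l (𝓝 (∫ s in a..τ, f s)) := by
    have := intervalIntegral.continuousOn_primitive_interval (by rwa [uIcc_of_le hab])
    rw [uIcc_of_le hab] at this
    exact (this τ hτ).tendsto.comp (tendsto_nhdsWithin_iff.2 ⟨hστ, hσ⟩)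
  have hdiff : Tendsto (fun i => ∫ s in a..σ i, (g i s - f s)) l (𝓝 0) := by
    rw [Metric.tendsto_nhds]
    intro ε hε
    have hε' : 0 < ε / (b - a + 1) := by have := sub_nonneg.2 hab; positivity
    filter_upwards [Metric.tendstoUniformlyOn_iff.mp hgf _ hε', hσ] with i hi hσi
    rw [dist_zero_right]
    calc ‖∫ s in a..σ i, (g i s - f s)‖ ≤ ε / (b - a + 1) * |σ i - a| := by
          refine intervalIntegral.norm_integral_le_of_norm_le_const fun x hx => ?_
          rw [← dist_eq_norm, dist_comm]
          exact (hi x (hsub hσi (uIoc_subset_uIcc hx))).le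
      _ ≤ ε / (b - a + 1) * (b - a) := by
          gcongr
          rw [abs_of_nonneg (sub_nonneg.2 hσi.1)]
          linarith [hσi.2]
      _ < ε := by
          rw [div_mul_eq_mul_div, div_lt_iff₀ (by linarith)]
          linarith
  refine (zero_add (∫ s in a..τ, f s) ▸ hdiff.add hprim).congr' ?_
  filter_upwards [hσ] with i hσi
  rw [intervalIntegral.integral_sub ((hg i).mono_set (hsub hσi)).intervalIntegrable
    (hf.mono_set (hsub hσi)).intervalIntegrable, sub_add_cancel]

section Pi

variable {r0 Ω : ℝ}

noncomputable def piDensity (r0 Ω : ℝ) (Q : ℝ × ℝ → ℝ) (z s : ℝ) : ℝ :=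
  (Ω ^ 2 * r0 ^ 2 / (2 * (1 - 2 * s * r0 ^ 2)) - Q (s, z)) * eFun r0 s

theorem one_sub_two_mul_mul_sq_pos (hr0 : r0 ≠ 0) {s : ℝ} (hs : s < 1 / (2 * r0 ^ 2)) :
    0 < 1 - 2 * s * r0 ^ 2 := by
  rw [lt_div_iff₀ (by positivity)] at hs
  linarith

theorem continuousOn_eFun (hr0 : r0 ≠ 0) {S : Set ℝ} (hS : ∀ s ∈ S, s < 1 / (2 * r0 ^ 2)) :
    ContinuousOn (eFun r0) S :=
  continuousOn_const.div (by fun_prop) fun s hs =>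
    (pow_pos (one_sub_two_mul_mul_sq_pos hr0 (hS s hs)) 2).ne'

theorem continuousOn_piDensity (hr0 : r0 ≠ 0) {Q : ℝ × ℝ → ℝ} {z : ℝ} {S : Set ℝ}
    (hQ : ContinuousOn (fun s => Q (s, z)) S) (hS : ∀ s ∈ S, s < 1 / (2 * r0 ^ 2)) :
    ContinuousOn (piDensity r0 Ω Q z) S := by
  refine ((continuousOn_const.div (by fun_prop) fun s hs => ?_).sub hQ).mul
    (continuousOn_eFun hr0 hS)
  exact mul_ne_zero two_ne_zero (one_sub_two_mul_mul_sq_pos hr0 (hS s hs)).ne'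

theorem hasDerivAt_inv_one_sub_two_mul_mul_sq {s : ℝ} (hs : 1 - 2 * s * r0 ^ 2 ≠ 0) :
    HasDerivAt (fun s => (1 - 2 * s * r0 ^ 2)⁻¹) (2 * r0 ^ 2 * ((1 - 2 * s * r0 ^ 2)⁻¹) ^ 2) s :=
  ((((hasDerivAt_id' s).const_mul 2).mul_const (r0 ^ 2)).const_sub 1).inv hs |>.congr_deriv
    (by field_simp)

/-- With `u = (1 - 2 s r0²)⁻¹` one has `e = r0⁴ u²` and `u' = 2 r0² u²`, so for constant `Q = B`
the density is the derivative of `Ω² r0⁴ u² / 8 - B r0² u / 2`. -/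
theorem integral_piDensity_const (hr0 : r0 ≠ 0) (B z : ℝ) {ρ : ℝ} (hρ : ρ < 1 / (2 * r0 ^ 2)) :
    ∫ s in (0 : ℝ)..ρ, piDensity r0 Ω (fun _ => B) z s =
      ((1 - 2 * ρ * r0 ^ 2)⁻¹ - 1) *
        (Ω ^ 2 * r0 ^ 4 * ((1 - 2 * ρ * r0 ^ 2)⁻¹ + 1) / 8 - B * r0 ^ 2 / 2) := by
  have hc : 0 < 1 / (2 * r0 ^ 2) := by positivity
  have hlt : ∀ s ∈ uIcc 0 ρ, s < 1 / (2 * r0 ^ 2) := fun s hs =>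
    hs.2.trans_lt (sup_lt_iff.2 ⟨hc, hρ⟩)
  rw [intervalIntegral.integral_eq_sub_of_hasDerivAt (f := fun s =>
    Ω ^ 2 * r0 ^ 4 / 8 * (1 - 2 * s * r0 ^ 2)⁻¹ ^ 2 - B * r0 ^ 2 / 2 * (1 - 2 * s * r0 ^ 2)⁻¹)]
  · ring
  · intro s hs
    have ht := (one_sub_two_mul_mul_sq_pos hr0 (hlt s hs)).ne'
    have hu := hasDerivAt_inv_one_sub_two_mul_mul_sq ht
    refine ((hu.pow 2).const_mul _ |>.sub (hu.const_mul _)).congr_deriv ?_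
    simp only [piDensity, eFun]
    field_simp
    ring
  · exact (continuousOn_piDensity hr0 continuousOn_const hlt).intervalIntegrable

theorem le_PiFun_of_le (hr0 : r0 ≠ 0) {Q : ℝ × ℝ → ℝ} {B z ρ : ℝ} (hρ0 : 0 ≤ ρ)
    (hρ : ρ < 1 / (2 * r0 ^ 2)) (hQ : ContinuousOn (fun s => Q (s, z)) (Icc 0 ρ))
    (hQB : ∀ s ∈ Icc 0 ρ, Q (s, z) ≤ B) :
    ((1 - 2 * ρ * r0 ^ 2)⁻¹ - 1) *
        (Ω ^ 2 * r0 ^ 4 * ((1 - 2 * ρ * r0 ^ 2)⁻¹ + 1) / 8 - B * r0 ^ 2 / 2) ≤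
      PiFun r0 Ω Q ρ z := by
  have hlt : ∀ s ∈ Icc 0 ρ, s < 1 / (2 * r0 ^ 2) := fun s hs => hs.2.trans_lt hρ
  rw [← integral_piDensity_const hr0 B z hρ]
  refine intervalIntegral.integral_mono_on hρ0
    ((continuousOn_piDensity hr0 continuousOn_const hlt).intervalIntegrable_of_Icc hρ0)
    ((continuousOn_piDensity hr0 hQ hlt).intervalIntegrable_of_Icc hρ0) fun s hs => ?_
  have he : 0 ≤ eFun r0 s := by unfold eFun; positivity
  exact mul_le_mul_of_nonneg_right (by linarith [hQB s hs]) he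

/-- Past this radius `u = (1 - 2ρr0²)⁻¹` exceeds both `1` and `4B/(Ω²r0²)`, which makes the lower
bound of `le_PiFun_of_le` positive. -/
noncomputable def aprioriBound (r0 Ω B : ℝ) : ℝ :=
  (1 - (max 1 (4 * B / (Ω ^ 2 * r0 ^ 2)))⁻¹) / (2 * r0 ^ 2)

theorem aprioriBound_lt (hr0 : r0 ≠ 0) (B : ℝ) : aprioriBound r0 Ω B < 1 / (2 * r0 ^ 2) := by
  have : 0 < (max 1 (4 * B / (Ω ^ 2 * r0 ^ 2)))⁻¹ :=
    inv_pos.2 (lt_max_of_lt_left one_pos)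
  unfold aprioriBound
  gcongr
  linarith

theorem lt_inv_one_sub_of_aprioriBound_lt (hr0 : r0 ≠ 0) {B ρ : ℝ}
    (hMρ : aprioriBound r0 Ω B < ρ) (hρ : ρ < 1 / (2 * r0 ^ 2)) :
    max 1 (4 * B / (Ω ^ 2 * r0 ^ 2)) < (1 - 2 * ρ * r0 ^ 2)⁻¹ := by
  have hu0 : 0 < max 1 (4 * B / (Ω ^ 2 * r0 ^ 2)) := lt_max_of_lt_left one_pos
  rw [lt_inv_comm₀ hu0 (one_sub_two_mul_mul_sq_pos hr0 hρ)]
  rw [aprioriBound, div_lt_iff₀ (by positivity)] at hMρ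
  linarith

theorem ArgminPi_subset_Icc_aprioriBound (hr0 : r0 ≠ 0) (hΩ : Ω ≠ 0) {Q : ℝ × ℝ → ℝ} {B z : ℝ}
    (hQ : ContinuousOn (fun s => Q (s, z)) (Ico 0 (1 / (2 * r0 ^ 2))))
    (hQB : ∀ s ∈ Ico 0 (1 / (2 * r0 ^ 2)), Q (s, z) ≤ B) :
    ArgminPi r0 Ω Q z ⊆ Icc 0 (aprioriBound r0 Ω B) := by
  rintro ρ ⟨⟨hρ0, hρ⟩, hmin⟩
  refine ⟨hρ0, not_lt.1 fun hMρ => ?_⟩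
  have hnonpos : PiFun r0 Ω Q ρ z ≤ 0 :=
    (hmin 0 ⟨le_rfl, by positivity⟩).trans_eq intervalIntegral.integral_same
  have hlow := le_PiFun_of_le (Ω := Ω) (B := B) hr0 hρ0 hρ (hQ.mono (Icc_subset_Ico_right hρ))
    fun s hs => hQB s ⟨hs.1, hs.2.trans_lt hρ⟩
  set u := (1 - 2 * ρ * r0 ^ 2)⁻¹
  have hu := lt_inv_one_sub_of_aprioriBound_lt hr0 hMρ hρ
  have hu1 : 1 < u := (le_max_left _ _).trans_lt hu
  have huB : 4 * B < Ω ^ 2 * r0 ^ 2 * u := by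
    rw [← div_lt_iff₀' (by positivity)]; exact (le_max_right _ _).trans_lt hu
  have hpos : 0 < (u - 1) * (Ω ^ 2 * r0 ^ 4 * (u + 1) / 8 - B * r0 ^ 2 / 2) := by
    have hΩr0 : 0 < Ω ^ 2 * r0 ^ 2 := by positivity
    have : 0 < r0 ^ 2 * (Ω ^ 2 * r0 ^ 2 * (u + 1) - 4 * B) := mul_pos (by positivity) (by linarith)
    exact mul_pos (by linarith) (by linarith)
  linarith

theorem tendsto_PiFun_of_tendstoUniformlyOn (hr0 : r0 ≠ 0) {H M z σ : ℝ}
    {Pn : ℕ → ℝ × ℝ → ℝ} {P : ℝ × ℝ → ℝ} {zn σn : ℕ → ℝ}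
    (hPnc : ∀ n, ContinuousOn (Pn n) (Icc 0 (1 / (2 * r0 ^ 2)) ×ˢ Icc 0 H))
    (hPc : ContinuousOn P (Icc 0 (1 / (2 * r0 ^ 2)) ×ˢ Icc 0 H))
    (hunif : TendstoUniformlyOn Pn P atTop (Icc 0 (1 / (2 * r0 ^ 2)) ×ˢ Icc 0 H))
    (hzn : ∀ n, zn n ∈ Icc 0 H) (hznz : Tendsto zn atTop (𝓝 z)) (hz : z ∈ Icc 0 H)
    (hM : M < 1 / (2 * r0 ^ 2)) (hσn : ∀ n, σn n ∈ Icc 0 M) (hσ : Tendsto σn atTop (𝓝 σ)) :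
    Tendsto (fun n => PiFun r0 Ω (Pn n) (σn n) (zn n)) atTop (𝓝 (PiFun r0 Ω P σ z)) := by
  have hMc : ∀ s ∈ Icc 0 M, s < 1 / (2 * r0 ^ 2) := fun s hs => hs.2.trans_lt hM
  have hslice : ∀ {Q : ℝ × ℝ → ℝ} {w : ℝ}, ContinuousOn Q (Icc 0 (1 / (2 * r0 ^ 2)) ×ˢ Icc 0 H) →
      w ∈ Icc 0 H → ContinuousOn (fun s => Q (s, w)) (Icc 0 M) := fun hQ hw =>
    hQ.comp (by fun_prop) fun s hs => ⟨⟨hs.1, (hMc s hs).le⟩, hw⟩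
  obtain ⟨E, hE⟩ := isCompact_Icc.exists_bound_of_continuousOn (continuousOn_eFun hr0 hMc)
  have hslices : TendstoUniformlyOn (fun n s => Pn n (s, zn n)) (fun s => P (s, z)) atTop
      (Icc 0 M) :=
    (hunif.comp_prodMk_of_tendsto hPc (isCompact_Icc.prod isCompact_Icc) hznz
      (Eventually.of_forall hzn) hz).mono (Icc_subset_Icc_right hM.le)
  have hdensity : TendstoUniformlyOn (fun n => piDensity r0 Ω (Pn n) (zn n))
      (piDensity r0 Ω P z) atTop (Icc 0 M) :=
    (TendstoUniformlyOn.fun_sub (fun _ hu => Eventually.of_forall fun _ _ _ =>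
      refl_mem_uniformity hu) hslices).mul_right_of_norm_le hE
  exact tendsto_intervalIntegral_of_tendstoUniformlyOn
    (fun n => (continuousOn_piDensity hr0 (hslice (hPnc n) (hzn n)) hMc).integrableOn_Icc)
    (continuousOn_piDensity hr0 (hslice hPc hz) hMc).integrableOn_Icc hdensity
    (Eventually.of_forall hσn) hσ (isClosed_Icc.mem_of_tendsto hσ (Eventually.of_forall hσn))

end Pi

theorem stmt4_general (r0 Ω H A : ℝ) (hr0 : 0 < r0) (hΩ : 0 < Ω)
    (Pn : ℕ → ℝ × ℝ → ℝ) (P : ℝ × ℝ → ℝ)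
    (hPnc : ∀ n, ContinuousOn (Pn n)
      (Set.Icc (0 : ℝ) (1 / (2 * r0 ^ 2)) ×ˢ Set.Icc (0 : ℝ) H))
    (hPc : ContinuousOn P (Set.Icc (0 : ℝ) (1 / (2 * r0 ^ 2)) ×ˢ Set.Icc (0 : ℝ) H))
    (hPnb : ∀ n, ∀ s ∈ Set.Icc (0 : ℝ) (1 / (2 * r0 ^ 2)), ∀ z ∈ Set.Icc (0 : ℝ) H,
      Pn n (s, z) ≤ Pn n (0, 0) + A)
    (hunif : TendstoUniformlyOn (fun n p => Pn n p) P atTop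
      (Set.Icc (0 : ℝ) (1 / (2 * r0 ^ 2)) ×ˢ Set.Icc (0 : ℝ) H))
    (zn : ℕ → ℝ) (z : ℝ) (hzn : ∀ n, zn n ∈ Set.Icc (0 : ℝ) H)
    (hznz : Tendsto zn atTop (nhds z)) (hz : z ∈ Set.Icc (0 : ℝ) H)
    (ρn : ℕ → ℝ) (ρ : ℝ) (hρn : ∀ n, ρn n ∈ ArgminPi r0 Ω (Pn n) (zn n))
    (hρnρ : Tendsto ρn atTop (nhds ρ)) :
    Tendsto (fun n => PiFun r0 Ω (Pn n) (ρn n) (zn n)) atTop (nhds (PiFun r0 Ω P ρ z)) ∧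
    ρ ∈ ArgminPi r0 Ω P z := by
  have h00 : ((0 : ℝ), (0 : ℝ)) ∈ Icc (0 : ℝ) (1 / (2 * r0 ^ 2)) ×ˢ Icc (0 : ℝ) H :=
    ⟨⟨le_rfl, by positivity⟩, ⟨le_rfl, hz.1.trans hz.2⟩⟩
  obtain ⟨C, hC⟩ := (hunif.tendsto_at h00).bddAbove_range
  have hPnB : ∀ n, ∀ s ∈ Ico 0 (1 / (2 * r0 ^ 2)), Pn n (s, zn n) ≤ C + A := fun n s hs =>
    (hPnb n s (Ico_subset_Icc_self hs) _ (hzn n)).trans (by gcongr; exact hC ⟨n, rfl⟩)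
  have hρnM : ∀ n, ρn n ∈ Icc 0 (aprioriBound r0 Ω (C + A)) := fun n =>
    ArgminPi_subset_Icc_aprioriBound hr0.ne' hΩ.ne'
      ((hPnc n).comp (by fun_prop) fun s hs => ⟨Ico_subset_Icc_self hs, hzn n⟩) (hPnB n) (hρn n)
  have hρM := isClosed_Icc.mem_of_tendsto hρnρ (Eventually.of_forall hρnM)
  have hM := aprioriBound_lt (Ω := Ω) hr0.ne' (C + A)
  have hconv := tendsto_PiFun_of_tendstoUniformlyOn (Ω := Ω) hr0.ne' hPnc hPc hunif hzn hznz hz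
    hM hρnM hρnρ
  refine ⟨hconv, ⟨hρM.1, hρM.2.trans_lt hM⟩, fun ρ' hρ' => ?_⟩
  have hconv' := tendsto_PiFun_of_tendstoUniformlyOn (Ω := Ω) hr0.ne' hPnc hPc hunif hzn hznz hz
    hρ'.2 (fun _ => ⟨hρ'.1, le_rfl⟩) tendsto_const_nhds
  exact le_of_tendsto_of_tendsto' hconv hconv' fun n => (hρn n).2 ρ' hρ'

/-- stability of minimizers. If `P_n → P` uniformly on `𝒟̄`, `z_n → z` in `[0,H]`,
`ρ_n ∈ Argmin Π_{P_n}(·, z_n)` and `ρ_n → ρ`, then `Π_{P_n}(ρ_n, z_n) → Π_P(ρ, z)` and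
`ρ ∈ Argmin Π_P(·, z)`. -/
theorem stmt4 (r0 Ω H A : ℝ) (hr0 : 0 < r0) (hΩ : 0 < Ω) (hH : 0 < H) (hA : 0 ≤ A)
    (Pn : ℕ → ℝ × ℝ → ℝ) (P : ℝ × ℝ → ℝ)
    (hPnc : ∀ n, ContinuousOn (Pn n)
      (Set.Icc (0 : ℝ) (1 / (2 * r0 ^ 2)) ×ˢ Set.Icc (0 : ℝ) H))
    (hPc : ContinuousOn P (Set.Icc (0 : ℝ) (1 / (2 * r0 ^ 2)) ×ˢ Set.Icc (0 : ℝ) H))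
    (hPnb : ∀ n, ∀ s ∈ Set.Icc (0 : ℝ) (1 / (2 * r0 ^ 2)), ∀ z ∈ Set.Icc (0 : ℝ) H,
      Pn n (s, z) ≤ Pn n (0, 0) + A)
    (hPb : ∀ s ∈ Set.Icc (0 : ℝ) (1 / (2 * r0 ^ 2)), ∀ z ∈ Set.Icc (0 : ℝ) H,
      P (s, z) ≤ P (0, 0) + A)
    (hunif : TendstoUniformlyOn (fun n p => Pn n p) P atTop
      (Set.Icc (0 : ℝ) (1 / (2 * r0 ^ 2)) ×ˢ Set.Icc (0 : ℝ) H))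
    (zn : ℕ → ℝ) (z : ℝ) (hzn : ∀ n, zn n ∈ Set.Icc (0 : ℝ) H)
    (hznz : Tendsto zn atTop (nhds z)) (hz : z ∈ Set.Icc (0 : ℝ) H)
    (ρn : ℕ → ℝ) (ρ : ℝ) (hρn : ∀ n, ρn n ∈ ArgminPi r0 Ω (Pn n) (zn n))
    (hρnρ : Tendsto ρn atTop (nhds ρ)) :
    Tendsto (fun n => PiFun r0 Ω (Pn n) (ρn n) (zn n)) atTop (nhds (PiFun r0 Ω P ρ z)) ∧
    ρ ∈ ArgminPi r0 Ω P z :=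
  stmt4_general r0 Ω H A hr0 hΩ Pn P hPnc hPc hPnb hunif zn z hzn hznz hz ρn ρ hρn hρnρ
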